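/- If a configuration η contains a rectangle of pluses with side lengths m and n and only zero spins elsewhere in the interior box, then H(η) = H(0) + 2J(m+n) − (λ+h)mn, where 2(m+n) counts the zero–plus boundary bonds and mn the pluses. -/
import Mathlib


/-- The four nearest neighbors of a site of ℤ². -/
def nbrs (x : ℤ × ℤ) : Finset (ℤ × ℤ) :=
  {(x.1 + 1, x.2), (x.1 - 1, x.2), (x.1, x.2 + 1), (x.1, x.2 - 1)}

lemma mem_nbrs {x y : ℤ × ℤ} : y ∈ nbrs x ↔
    y = (x.1 + 1, x.2) ∨ y = (x.1 - 1, x.2) ∨ y = (x.1, x.2 + 1) ∨ y = (x.1, x.2 - 1) := by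
  simp [nbrs]

lemma nbrs_symm {x y : ℤ × ℤ} : y ∈ nbrs x ↔ x ∈ nbrs y := by
  simp only [mem_nbrs, Prod.ext_iff]
  omega

lemma sum_nbrs (x : ℤ × ℤ) (f : ℤ × ℤ → ℝ) :
    ∑ y ∈ nbrs x, f y =
      f (x.1 + 1, x.2) + f (x.1 - 1, x.2) + f (x.1, x.2 + 1) + f (x.1, x.2 - 1) := by
  have h1 : ((x.1 + 1, x.2) : ℤ × ℤ) ≠ (x.1 - 1, x.2) := by simp [Prod.ext_iff]; try omega
  have h2 : ((x.1 + 1, x.2) : ℤ × ℤ) ≠ (x.1, x.2 + 1) := by simp [Prod.ext_iff]; try omega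
  have h3 : ((x.1 + 1, x.2) : ℤ × ℤ) ≠ (x.1, x.2 - 1) := by simp [Prod.ext_iff]; try omega
  have h4 : ((x.1 - 1, x.2) : ℤ × ℤ) ≠ (x.1, x.2 + 1) := by simp [Prod.ext_iff]; try omega
  have h5 : ((x.1 - 1, x.2) : ℤ × ℤ) ≠ (x.1, x.2 - 1) := by simp [Prod.ext_iff]; try omega
  have h6 : ((x.1, x.2 + 1) : ℤ × ℤ) ≠ (x.1, x.2 - 1) := by simp [Prod.ext_iff]; try omega
  show ∑ y ∈ insert (x.1 + 1, x.2) (insert (x.1 - 1, x.2) (insert (x.1, x.2 + 1)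
      ({(x.1, x.2 - 1)} : Finset (ℤ × ℤ)))), f y = _
  rw [Finset.sum_insert (by simp [h1, h2, h3]), Finset.sum_insert (by simp [h4, h5]),
    Finset.sum_insert (by simp [h6]), Finset.sum_singleton]
  ring

lemma card_nbrs (x : ℤ × ℤ) : (nbrs x).card = 4 := by
  have h : ((nbrs x).card : ℝ) = 4 := by
    rw [Finset.card_eq_sum_ones]
    push_cast
    rw [sum_nbrs x (fun _ => (1 : ℝ))]
    norm_num
  exact_mod_cast h

lemma pair_sum_symm (Λ₀ : Finset (ℤ × ℤ)) (k : ℤ × ℤ → ℤ × ℤ → ℝ) :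
    ∑ x ∈ Λ₀, ∑ y ∈ (nbrs x).filter (· ∈ Λ₀), k x y =
    ∑ x ∈ Λ₀, ∑ y ∈ (nbrs x).filter (· ∈ Λ₀), k y x := by
  have key : ∀ g : ℤ × ℤ → ℤ × ℤ → ℝ,
      ∑ x ∈ Λ₀, ∑ y ∈ (nbrs x).filter (· ∈ Λ₀), g x y =
      ∑ p ∈ (Λ₀ ×ˢ Λ₀).filter (fun p => p.2 ∈ nbrs p.1), g p.1 p.2 := by
    intro g
    rw [Finset.sum_filter, Finset.sum_product]
    refine Finset.sum_congr rfl fun x hx => ?_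
    rw [show (nbrs x).filter (· ∈ Λ₀) = Λ₀.filter (· ∈ nbrs x) by
      ext y; simp [and_comm], Finset.sum_filter]
  rw [key, key (fun x y => k y x)]
  refine Finset.sum_nbij' (fun p => Prod.swap p) (fun p => Prod.swap p) ?_ ?_ ?_ ?_ ?_
  · intro p hp
    simp only [Finset.mem_filter, Finset.mem_product] at hp ⊢
    exact ⟨⟨hp.1.2, hp.1.1⟩, nbrs_symm.mp hp.2⟩
  · intro p hp
    simp only [Finset.mem_filter, Finset.mem_product] at hp ⊢
    exact ⟨⟨hp.1.2, hp.1.1⟩, nbrs_symm.mp hp.2⟩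
  · intro p _; simp
  · intro p _; simp
  · intro p _; rfl

lemma cardIccR (p1 p2 q1 q2 : ℤ) (h1 : p1 ≤ q1 + 1) (h2 : p2 ≤ q2 + 1) :
    ((Finset.Icc (p1, p2) (q1, q2)).card : ℝ) =
      ((q1 + 1 - p1 : ℤ) : ℝ) * ((q2 + 1 - p2 : ℤ) : ℝ) := by
  rw [Finset.Icc_prod_def, Finset.card_product]
  simp only [Int.card_Icc]
  rw [Nat.cast_mul, ← Int.cast_natCast (R := ℝ), ← Int.cast_natCast (R := ℝ) ((q2 + 1 - p2).toNat),
    Int.toNat_of_nonneg (by omega), Int.toNat_of_nonneg (by omega)]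

/-- Blume–Capel energy with zero boundary conditions on the interior box Λ₀:
(J/2)Σ(σ(i)−σ(j))² over interior bonds, J·σ(i)² per bond leaving Λ₀, minus
λΣσ² and hΣσ. -/
noncomputable def BCenergy (Λ₀ : Finset (ℤ × ℤ)) (J lam h : ℝ)
    (σ : ℤ × ℤ → ℤ) : ℝ :=
  J / 2 * ∑ x ∈ Λ₀, ∑ y ∈ (nbrs x).filter (· ∈ Λ₀), ((σ x - σ y : ℤ) : ℝ) ^ 2
    + J * ∑ x ∈ Λ₀, ∑ _y ∈ (nbrs x).filter (· ∉ Λ₀), ((σ x : ℤ) : ℝ) ^ 2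
    - lam * ∑ x ∈ Λ₀, ((σ x : ℤ) : ℝ) ^ 2
    - h * ∑ x ∈ Λ₀, ((σ x : ℤ) : ℝ)

/-- A rectangle of pluses with side lengths m and n strictly inside the
interior box, with zeros elsewhere, has energy 2J(m+n) − (λ+h)mn relative to
the all-zero configuration H(0) = 0. -/
theorem rectangle_energy (Λ₀ : Finset (ℤ × ℤ)) (J lam h : ℝ)
    (m n : ℕ) (hm : 1 ≤ m) (hn : 1 ≤ n) (a : ℤ × ℤ)
    (R : Finset (ℤ × ℤ))
    (hR : R = Finset.Icc a (a.1 + (m : ℤ) - 1, a.2 + (n : ℤ) - 1))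
    (hRΛ : R ⊆ Λ₀) (hRint : ∀ x ∈ R, ∀ y ∈ nbrs x, y ∈ Λ₀)
    (η : ℤ × ℤ → ℤ) (hη : ∀ x, η x = if x ∈ R then 1 else 0) :
    BCenergy Λ₀ J lam h η =
      BCenergy Λ₀ J lam h (fun _ => 0) + 2 * J * ((m : ℝ) + n) -
        (lam + h) * ((m : ℝ) * n) := by
  set ind : ℤ × ℤ → ℝ := fun x => if x ∈ R then 1 else 0 with hind
  have hη' : ∀ x, ((η x : ℤ) : ℝ) = ind x := by
    intro x; rw [hη]; by_cases hx : x ∈ R <;> simp [hind, hx]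
  have hind01 : ∀ x, ind x = 0 ∨ ind x = 1 := by
    intro x; by_cases hx : x ∈ R <;> simp [hind, hx]
  -- card of R
  have hRcard : ((R.card : ℝ)) = (m : ℝ) * n := by
    rw [hR]
    rw [show ((a.1 + (m : ℤ) - 1, a.2 + (n : ℤ) - 1) : ℤ × ℤ) =
      ((a.1 + (m : ℤ) - 1 : ℤ), (a.2 + (n : ℤ) - 1 : ℤ)) from rfl]
    rw [show (a : ℤ × ℤ) = ((a.1 : ℤ), (a.2 : ℤ)) from rfl]
    rw [cardIccR _ _ _ _ (by omega) (by omega)]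
    push_cast; ring
  -- sum over Λ₀ of an R-indicator-supported function
  have sumR : ∀ f : ℤ × ℤ → ℝ,
      (∑ x ∈ Λ₀, if x ∈ R then f x else 0) = ∑ x ∈ R, f x := by
    intro f
    rw [Finset.sum_ite_mem, Finset.inter_eq_right.mpr hRΛ]
  -- the single-site sums
  have hT : (∑ x ∈ Λ₀, ((η x : ℤ) : ℝ)) = (m : ℝ) * n := by
    calc (∑ x ∈ Λ₀, ((η x : ℤ) : ℝ)) = ∑ x ∈ Λ₀, if x ∈ R then (1 : ℝ) else 0 := by
          exact Finset.sum_congr rfl fun x _ => hη' x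
      _ = ∑ x ∈ R, (1 : ℝ) := sumR _
      _ = (m : ℝ) * n := by rw [Finset.sum_const, nsmul_eq_mul, mul_one, hRcard]
  have hQ : (∑ x ∈ Λ₀, ((η x : ℤ) : ℝ) ^ 2) = (m : ℝ) * n := by
    rw [← hT]
    refine Finset.sum_congr rfl fun x _ => ?_
    rw [hη']
    rcases hind01 x with h0 | h0 <;> rw [h0] <;> norm_num
  -- boundary term vanishes
  have hB : (∑ x ∈ Λ₀, ∑ _y ∈ (nbrs x).filter (· ∉ Λ₀), ((η x : ℤ) : ℝ) ^ 2) = 0 := by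
    refine Finset.sum_eq_zero fun x hx => ?_
    by_cases hxR : x ∈ R
    · have : (nbrs x).filter (· ∉ Λ₀) = ∅ := by
        rw [Finset.filter_eq_empty_iff]
        intro y hy hy'
        exact hy' (hRint x hxR y hy)
      simp [this]
    · have : ((η x : ℤ) : ℝ) = 0 := by rw [hη']; simp [hind, hxR]
      simp [this]
  -- full neighbor set is inside Λ₀ for x ∈ R
  have hfilt : ∀ x ∈ R, (nbrs x).filter (· ∈ Λ₀) = nbrs x := by
    intro x hx
    exact Finset.filter_true_of_mem fun y hy => hRint x hx y hy
  -- the four directional counts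
  have hmem : ∀ z : ℤ × ℤ, z ∈ R ↔
      a.1 ≤ z.1 ∧ z.1 ≤ a.1 + (m : ℤ) - 1 ∧ a.2 ≤ z.2 ∧ z.2 ≤ a.2 + (n : ℤ) - 1 := by
    intro z
    rw [hR, Finset.mem_Icc]
    constructor
    · rintro ⟨⟨u1, u2⟩, v1, v2⟩; exact ⟨u1, v1, u2, v2⟩
    · rintro ⟨u1, v1, u2, v2⟩; exact ⟨⟨u1, u2⟩, v1, v2⟩
  have dirCount : ∀ s t c1 c2 d1 d2 : ℤ,
      (∀ z : ℤ × ℤ, (z ∈ R ∧ ((z.1 + s, z.2 + t) : ℤ × ℤ) ∈ R) ↔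
        (c1 ≤ z.1 ∧ z.1 ≤ d1 ∧ c2 ≤ z.2 ∧ z.2 ≤ d2)) →
      c1 ≤ d1 + 1 → c2 ≤ d2 + 1 →
      (∑ x ∈ R, ind (x.1 + s, x.2 + t)) =
        ((d1 + 1 - c1 : ℤ) : ℝ) * ((d2 + 1 - c2 : ℤ) : ℝ) := by
    intro s t c1 c2 d1 d2 hiff h1 h2
    have hsum : (∑ x ∈ R, ind (x.1 + s, x.2 + t)) =
        ((R.filter (fun x => ((x.1 + s, x.2 + t) : ℤ × ℤ) ∈ R)).card : ℝ) := by
      rw [hind, Finset.sum_boole]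
    rw [hsum]
    have hfe : R.filter (fun x => ((x.1 + s, x.2 + t) : ℤ × ℤ) ∈ R) =
        Finset.Icc ((c1, c2) : ℤ × ℤ) ((d1, d2) : ℤ × ℤ) := by
      ext z
      rw [Finset.mem_filter, Finset.mem_Icc]
      rw [hiff z]
      constructor
      · rintro ⟨u1, v1, u2, v2⟩; exact ⟨⟨u1, u2⟩, v1, v2⟩
      · rintro ⟨⟨u1, u2⟩, v1, v2⟩; exact ⟨u1, v1, u2, v2⟩
    rw [hfe, cardIccR _ _ _ _ h1 h2]
  -- interior sum
  have hS : (∑ x ∈ Λ₀, ∑ y ∈ (nbrs x).filter (· ∈ Λ₀), ((η x - η y : ℤ) : ℝ) ^ 2)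
      = 4 * ((m : ℝ) + n) := by
    have hpt : ∀ x y : ℤ × ℤ, ((η x - η y : ℤ) : ℝ) ^ 2 =
        ind x + ind y - 2 * (ind x * ind y) := by
      intro x y
      have : ((η x - η y : ℤ) : ℝ) = ind x - ind y := by push_cast [hη']; ring
      rw [this]
      rcases hind01 x with h0 | h0 <;> rcases hind01 y with h1 | h1 <;>
        rw [h0, h1] <;> norm_num
    have split : (∑ x ∈ Λ₀, ∑ y ∈ (nbrs x).filter (· ∈ Λ₀), ((η x - η y : ℤ) : ℝ) ^ 2)
        = (∑ x ∈ Λ₀, ∑ y ∈ (nbrs x).filter (· ∈ Λ₀), ind x)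
          + (∑ x ∈ Λ₀, ∑ y ∈ (nbrs x).filter (· ∈ Λ₀), ind y)
          - 2 * (∑ x ∈ Λ₀, ∑ y ∈ (nbrs x).filter (· ∈ Λ₀), ind x * ind y) := by
      simp_rw [hpt, Finset.sum_sub_distrib, Finset.sum_add_distrib, ← Finset.mul_sum]
    have hA : (∑ x ∈ Λ₀, ∑ y ∈ (nbrs x).filter (· ∈ Λ₀), ind x) = 4 * ((m : ℝ) * n) := by
      have : ∀ x ∈ Λ₀, (∑ y ∈ (nbrs x).filter (· ∈ Λ₀), ind x)
          = if x ∈ R then (4 : ℝ) else 0 := by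
        intro x hx
        by_cases hxR : x ∈ R
        · rw [hfilt x hxR, Finset.sum_const, card_nbrs, if_pos hxR]
          simp [hind, hxR]
        · rw [Finset.sum_const, if_neg hxR]
          simp [hind, hxR]
      rw [Finset.sum_congr rfl this, sumR, Finset.sum_const, nsmul_eq_mul, hRcard]
      ring
    have hA' : (∑ x ∈ Λ₀, ∑ y ∈ (nbrs x).filter (· ∈ Λ₀), ind y) = 4 * ((m : ℝ) * n) := by
      rw [← pair_sum_symm Λ₀ (fun x y => ind x)]
      exact hA
    have hC : (∑ x ∈ Λ₀, ∑ y ∈ (nbrs x).filter (· ∈ Λ₀), ind x * ind y)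
        = 2 * (((m : ℝ) - 1) * n) + 2 * ((m : ℝ) * ((n : ℝ) - 1)) := by
      have step1 : ∀ x ∈ Λ₀, (∑ y ∈ (nbrs x).filter (· ∈ Λ₀), ind x * ind y)
          = if x ∈ R then (∑ y ∈ nbrs x, ind y) else 0 := by
        intro x hx
        by_cases hxR : x ∈ R
        · rw [if_pos hxR, hfilt x hxR]
          refine Finset.sum_congr rfl fun y _ => ?_
          have h1 : ind x = 1 := by simp [hind, hxR]
          rw [h1, one_mul]
        · rw [if_neg hxR]
          refine Finset.sum_eq_zero fun y _ => ?_
          simp [hind, hxR]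
      rw [Finset.sum_congr rfl step1, sumR]
      have step2 : (∑ x ∈ R, ∑ y ∈ nbrs x, ind y)
          = (∑ x ∈ R, ind (x.1 + 1, x.2 + 0)) + (∑ x ∈ R, ind (x.1 + (-1), x.2 + 0))
            + (∑ x ∈ R, ind (x.1 + 0, x.2 + 1)) + (∑ x ∈ R, ind (x.1 + 0, x.2 + (-1))) := by
        rw [← Finset.sum_add_distrib, ← Finset.sum_add_distrib, ← Finset.sum_add_distrib]
        refine Finset.sum_congr rfl fun x _ => ?_
        rw [sum_nbrs]
        simp [sub_eq_add_neg]
      have d1 := dirCount 1 0 a.1 a.2 (a.1 + (m : ℤ) - 2) (a.2 + (n : ℤ) - 1)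
        (by intro z; simp only [hmem]; omega) (by omega) (by omega)
      have d2 := dirCount (-1) 0 (a.1 + 1) a.2 (a.1 + (m : ℤ) - 1) (a.2 + (n : ℤ) - 1)
        (by intro z; simp only [hmem]; omega) (by omega) (by omega)
      have d3 := dirCount 0 1 a.1 a.2 (a.1 + (m : ℤ) - 1) (a.2 + (n : ℤ) - 2)
        (by intro z; simp only [hmem]; omega) (by omega) (by omega)
      have d4 := dirCount 0 (-1) a.1 (a.2 + 1) (a.1 + (m : ℤ) - 1) (a.2 + (n : ℤ) - 1)
        (by intro z; simp only [hmem]; omega) (by omega) (by omega)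
      rw [step2, d1, d2, d3, d4]
      push_cast
      ring
    rw [split, hA, hA', hC]
    ring
  -- put it together
  have hzero : BCenergy Λ₀ J lam h (fun _ => 0) = 0 := by
    simp [BCenergy]
  rw [BCenergy, hzero, hS, hB, hQ, hT]
  ring
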